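/- arXiv:1509.08816 — 3 statements merged into one kernel-verified Lean document; each statement's English description precedes it below -/
import Mathlib

section
/- If ν is a Lévy measure on ℝ^d with density q (i.e., ν(dv) = q(v)dv with ν({0}) = 0 and ∫(|x|^2 ∧ 1)ν(dx) < ∞), then for every z ∈ ℝ^d with z ≠ 0, the measure ρ(v,z)ν(dv) is finite, where ρ(v,z) := (q(v) ∧ q(v+z))/q(v) when q(v) > 0 and ρ(v,z) := 1 otherwise. -/
open MeasureTheory
open scoped ENNReal

/-- If `ν` is a Lévy measure on `ℝ^d` with density `q`, then for every `z ≠ 0`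
the measure `ρ(v,z) ν(dv)` is finite, where
`ρ(v,z) = (q(v) ∧ q(v+z))/q(v)` when `q(v) > 0`, and `ρ(v,z) = 1` otherwise. -/
theorem rho_nu_finite {d : ℕ} (q : EuclideanSpace ℝ (Fin d) → ℝ≥0∞)
    (hq : Measurable q)
    (ν : Measure (EuclideanSpace ℝ (Fin d)))
    (hν : ν = MeasureTheory.volume.withDensity q)
    (h0 : ν {0} = 0)
    (hlevy : ∫⁻ x, min (ENNReal.ofReal (‖x‖ ^ 2)) 1 ∂ν < ⊤)
    (z : EuclideanSpace ℝ (Fin d)) (hz : z ≠ 0) :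
    ∫⁻ v, (if q v = 0 then 1 else min (q (v + z)) (q v) / q v) ∂ν < ⊤ := by
  set ε : ℝ := ‖z‖ / 2 with hεdef
  have hε : 0 < ε := by
    have : 0 < ‖z‖ := norm_pos_iff.mpr hz
    positivity
  set S : Set (EuclideanSpace ℝ (Fin d)) := {x | ε ≤ ‖x‖} with hSdef
  have hS : MeasurableSet S := measurableSet_le measurable_const measurable_norm
  -- ν S is finite
  have hc : (0 : ℝ≥0∞) < min (ENNReal.ofReal (ε ^ 2)) 1 := by
    simp [lt_min_iff, ENNReal.ofReal_pos]
    positivity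
  have hνS : ν S < ⊤ := by
    have key : min (ENNReal.ofReal (ε ^ 2)) 1 * ν S ≤
        ∫⁻ x, min (ENNReal.ofReal (‖x‖ ^ 2)) 1 ∂ν := by
      rw [← setLIntegral_const S _]
      refine le_trans (setLIntegral_mono ((ENNReal.measurable_ofReal.comp
        (measurable_norm.pow_const 2)).min measurable_const) ?_)
        (setLIntegral_le_lintegral S _)
      intro x hx
      have hx' : ε ≤ ‖x‖ := hx
      refine min_le_min (ENNReal.ofReal_le_ofReal ?_) le_rfl
      show ε ^ 2 ≤ ‖x‖ ^ 2
      nlinarith [norm_nonneg x, hε.le]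
    by_contra h
    push_neg at h
    have hT : ν S = ⊤ := top_le_iff.mp h
    rw [hT, ENNReal.mul_top hc.ne'] at key
    exact absurd (key.trans_lt hlevy) (lt_irrefl _)
  -- rewrite the integral against Lebesgue
  set f : EuclideanSpace ℝ (Fin d) → ℝ≥0∞ :=
    fun v => if q v = 0 then 1 else min (q (v + z)) (q v) / q v with hfdef
  have hf : Measurable f := by
    refine Measurable.ite ?_ measurable_const ?_
    · exact hq (measurableSet_singleton 0)
    · exact ((hq.comp (measurable_id.add_const z)).min hq).div hq
  have hrw : ∫⁻ v, f v ∂ν = ∫⁻ v, q v * f v ∂volume := by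
    rw [hν, lintegral_withDensity_eq_lintegral_mul _ hq hf]
    simp [Pi.mul_apply]
  show ∫⁻ v, f v ∂ν < ⊤
  rw [hrw]
  -- pointwise bound
  have hpt : ∀ v, q v * f v ≤ S.indicator q v + S.indicator q (v + z) := by
    intro v
    have hbound : q v * f v ≤ min (q (v + z)) (q v) := by
      by_cases h : q v = 0
      · simp [hfdef, h]
      · simp only [hfdef, if_neg h]
        exact ENNReal.mul_div_le
    have hor : ε ≤ ‖v‖ ∨ ε ≤ ‖v + z‖ := by
      by_contra hcon
      push_neg at hcon
      have h1 : ‖z‖ ≤ ‖v + z‖ + ‖v‖ := by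
        calc ‖z‖ = ‖(v + z) - v‖ := by rw [add_sub_cancel_left]
        _ ≤ ‖v + z‖ + ‖v‖ := norm_sub_le _ _
      have h2 := hcon.1
      have h3 := hcon.2
      rw [hεdef] at h2 h3
      linarith
    rcases hor with h | h
    · calc q v * f v ≤ min (q (v + z)) (q v) := hbound
        _ ≤ q v := min_le_right _ _
        _ = S.indicator q v := (Set.indicator_of_mem (show v ∈ S from h) q).symm
        _ ≤ _ := le_self_add
    · calc q v * f v ≤ min (q (v + z)) (q v) := hbound
        _ ≤ q (v + z) := min_le_left _ _
        _ = S.indicator q (v + z) := (Set.indicator_of_mem (show v + z ∈ S from h) q).symm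
        _ ≤ _ := le_add_self
  calc ∫⁻ v, q v * f v ∂volume
      ≤ ∫⁻ v, (S.indicator q v + S.indicator q (v + z)) ∂volume :=
        lintegral_mono hpt
    _ = (∫⁻ v, S.indicator q v ∂volume) + ∫⁻ v, S.indicator q (v + z) ∂volume :=
        lintegral_add_left (hq.indicator hS) _
    _ = ν S + ν S := by
        rw [lintegral_add_right_eq_self (fun v => S.indicator q v) z]
        rw [lintegral_indicator hS q, hν, withDensity_apply _ hS]
    _ < ⊤ := ENNReal.add_lt_top.mpr ⟨hνS, hνS⟩
end

section
/- There exists a constant C > 0 (depending on m and ν) such that for all x, y ∈ ℝ^d with x ≠ y, setting z = x - y, one has ∫_{|v|≤m} |z + v - R(x,y)v|^2 · ((q(v) ∧ q(v+z)𝟙_{|v+z|≤m})/q(v)) ν(dv) ≤ C(1 + |z|^2). -/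
/-!
The reflection `R = R(x,y)` fixes the hyperplane orthogonal to `z = x - y` and sends `z` to `-z`,
so `z + v - Rv = (⟪e, v + z⟫ + ⟪e, v⟫) e` for the unit vector `e` along `z`, whence
`|z + v - Rv|² ≤ 2|v + z|² + 2|v|²`. The `|v|²` term is integrable on `{|v| ≤ m}` against `ν`.
For the `|v + z|²` term, the control function satisfies `ρ(v,z) q(v) ≤ q(v+z) 𝟙_{|v+z|≤m}`, so
after the translation `v ↦ v + z` of Lebesgue measure it is bounded by the same integral.
-/

open MeasureTheory
open scoped ENNReal RealInnerProductSpace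

/-- The reflection operator `R(x,y)v = v - 2⟨e,v⟩e` where `e = (x-y)/‖x-y‖`. -/
noncomputable def reflectOp {d : ℕ} (x y v : EuclideanSpace ℝ (Fin d)) :
    EuclideanSpace ℝ (Fin d) :=
  v - (2 * ⟪‖x - y‖⁻¹ • (x - y), v⟫) • (‖x - y‖⁻¹ • (x - y))

section ControlRatio

variable {G : Type*} [AddGroup G]

/-- The paper's control function `ρ(v, z)`, for `S = {v | ‖v‖ ≤ m}`. -/
noncomputable def controlRatio (S : Set G) (q : G → ℝ≥0∞) (z v : G) : ℝ≥0∞ :=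
  if q v = 0 then 1 else min (q v) (S.indicator q (v + z)) / q v

variable {S : Set G} {q : G → ℝ≥0∞}

lemma controlRatio_le_one (z v : G) : controlRatio S q z v ≤ 1 := by
  unfold controlRatio
  split_ifs with h
  · exact le_rfl
  · exact ENNReal.div_le_of_le_mul (by rw [one_mul]; exact min_le_left _ _)

lemma controlRatio_mul_le (z v : G) : controlRatio S q z v * q v ≤ S.indicator q (v + z) := by
  unfold controlRatio
  split_ifs with h
  · simp [h]
  · exact ENNReal.mul_le_of_le_div (ENNReal.div_le_div_right (min_le_right _ _) _)

variable [MeasurableSpace G] [MeasurableAdd G]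

lemma measurable_controlRatio (hS : MeasurableSet S) (hq : Measurable q) (z : G) :
    Measurable (controlRatio S q z) :=
  Measurable.ite (hq (measurableSet_singleton 0)) measurable_const
    ((hq.min ((hq.indicator hS).comp (measurable_add_const z))).div hq)

lemma lintegral_comp_add_mul_controlRatio_le (μ : Measure G) [μ.IsAddRightInvariant]
    (hS : MeasurableSet S) (hq : Measurable q) {f : G → ℝ≥0∞} (hf : Measurable f) (z : G) :
    ∫⁻ v, f (v + z) * controlRatio S q z v ∂μ.withDensity q ≤
      ∫⁻ w in S, f w ∂μ.withDensity q := by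
  have hpointwise : ∀ v, q v * (f (v + z) * controlRatio S q z v) ≤
      S.indicator (fun w => q w * f w) (v + z) := fun v =>
    calc q v * (f (v + z) * controlRatio S q z v)
        = f (v + z) * (controlRatio S q z v * q v) := by ring
      _ ≤ f (v + z) * S.indicator q (v + z) := by gcongr; exact controlRatio_mul_le z v
      _ = S.indicator (fun w => q w * f w) (v + z) := by
          by_cases hv : v + z ∈ S <;> simp [hv, mul_comm]
  have hmeas : Measurable fun v => f (v + z) * controlRatio S q z v :=
    (hf.comp (measurable_add_const z)).mul (measurable_controlRatio hS hq z)
  rw [lintegral_withDensity_eq_lintegral_mul _ hq hmeas, restrict_withDensity hS,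
    lintegral_withDensity_eq_lintegral_mul _ hq hf, ← lintegral_indicator hS]
  calc ∫⁻ v, (q * fun v => f (v + z) * controlRatio S q z v) v ∂μ
      ≤ ∫⁻ v, S.indicator (fun w => q w * f w) (v + z) ∂μ := lintegral_mono hpointwise
    _ = ∫⁻ w, S.indicator (fun w => q w * f w) w ∂μ := lintegral_add_right_eq_self _ z

end ControlRatio

section Reflection

variable {F : Type*} [NormedAddCommGroup F] [InnerProductSpace ℝ F]

lemma inner_normalize_smul_normalize_eq_self (z : F) : ⟪‖z‖⁻¹ • z, z⟫ • (‖z‖⁻¹ • z) = z := by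
  rcases eq_or_ne z 0 with rfl | hz
  · simp
  have hz' : ‖z‖ ≠ 0 := norm_ne_zero_iff.mpr hz
  rw [real_inner_smul_left, real_inner_self_eq_norm_sq, smul_smul]
  field_simp
  exact one_smul ℝ z

lemma norm_normalize_le_one (z : F) : ‖‖z‖⁻¹ • z‖ ≤ 1 := by
  rcases eq_or_ne z 0 with rfl | hz
  · simp
  · exact (norm_smul_inv_norm hz).le

end Reflection

lemma sub_add_sub_reflectOp {d : ℕ} (x y v : EuclideanSpace ℝ (Fin d)) :
    (x - y) + v - reflectOp x y v =
      (⟪‖x - y‖⁻¹ • (x - y), v + (x - y)⟫ + ⟪‖x - y‖⁻¹ • (x - y), v⟫) • (‖x - y‖⁻¹ • (x - y)) := by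
  conv_lhs => rw [← inner_normalize_smul_normalize_eq_self (x - y)]
  rw [reflectOp, inner_add_right]
  module

lemma norm_sub_add_sub_reflectOp_le {d : ℕ} (x y v : EuclideanSpace ℝ (Fin d)) :
    ‖(x - y) + v - reflectOp x y v‖ ≤ ‖v + (x - y)‖ + ‖v‖ := by
  set e := ‖x - y‖⁻¹ • (x - y)
  have he : ‖e‖ ≤ 1 := norm_normalize_le_one (x - y)
  have hinner (w : EuclideanSpace ℝ (Fin d)) : |⟪e, w⟫| ≤ ‖w‖ :=
    (abs_real_inner_le_norm e w).trans (mul_le_of_le_one_left (norm_nonneg w) he)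
  rw [sub_add_sub_reflectOp, norm_smul, Real.norm_eq_abs]
  calc |⟪e, v + (x - y)⟫ + ⟪e, v⟫| * ‖e‖ ≤ |⟪e, v + (x - y)⟫ + ⟪e, v⟫| :=
        mul_le_of_le_one_right (abs_nonneg _) he
    _ ≤ |⟪e, v + (x - y)⟫| + |⟪e, v⟫| := abs_add_le _ _
    _ ≤ ‖v + (x - y)‖ + ‖v‖ := add_le_add (hinner _) (hinner _)

lemma ofReal_sq_norm_sub_add_sub_reflectOp_le {d : ℕ} (x y v : EuclideanSpace ℝ (Fin d)) :
    ENNReal.ofReal (‖(x - y) + v - reflectOp x y v‖ ^ 2) ≤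
      2 * ENNReal.ofReal (‖v + (x - y)‖ ^ 2) + 2 * ENNReal.ofReal (‖v‖ ^ 2) := by
  have hsq : ‖(x - y) + v - reflectOp x y v‖ ^ 2 ≤ 2 * ‖v + (x - y)‖ ^ 2 + 2 * ‖v‖ ^ 2 :=
    calc ‖(x - y) + v - reflectOp x y v‖ ^ 2 ≤ (‖v + (x - y)‖ + ‖v‖) ^ 2 := by
          gcongr; exact norm_sub_add_sub_reflectOp_le x y v
      _ ≤ 2 * ‖v + (x - y)‖ ^ 2 + 2 * ‖v‖ ^ 2 := by
          linarith [add_sq_le (a := ‖v + (x - y)‖) (b := ‖v‖)]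
  calc ENNReal.ofReal (‖(x - y) + v - reflectOp x y v‖ ^ 2)
      ≤ ENNReal.ofReal (2 * ‖v + (x - y)‖ ^ 2 + 2 * ‖v‖ ^ 2) := ENNReal.ofReal_le_ofReal hsq
    _ = 2 * ENNReal.ofReal (‖v + (x - y)‖ ^ 2) + 2 * ENNReal.ofReal (‖v‖ ^ 2) := by
        rw [ENNReal.ofReal_add (by positivity) (by positivity), ENNReal.ofReal_mul zero_le_two,
          ENNReal.ofReal_mul zero_le_two, ENNReal.ofReal_ofNat]

theorem linear_growth_general {d : ℕ} (m : ℝ)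
    (q : EuclideanSpace ℝ (Fin d) → ℝ≥0∞) (hq : Measurable q)
    (ν : Measure (EuclideanSpace ℝ (Fin d)))
    (hν : ν = MeasureTheory.volume.withDensity q)
    (hsmall : ∫⁻ v in {v | ‖v‖ ≤ m}, ENNReal.ofReal (‖v‖ ^ 2) ∂ν < ⊤) :
    ∃ C : ℝ≥0∞, 0 < C ∧ C < ⊤ ∧
      ∀ x y : EuclideanSpace ℝ (Fin d), x ≠ y →
        ∫⁻ v in {v | ‖v‖ ≤ m},
            ENNReal.ofReal (‖(x - y) + v - reflectOp x y v‖ ^ 2) *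
              (if q v = 0 then 1 else
                min (q v) (if ‖v + (x - y)‖ ≤ m then q (v + (x - y)) else 0) / q v) ∂ν
          ≤ C * (1 + ENNReal.ofReal (‖x - y‖ ^ 2)) := by
  subst hν
  set S : Set (EuclideanSpace ℝ (Fin d)) := {v | ‖v‖ ≤ m}
  have hS : MeasurableSet S := measurableSet_le measurable_norm measurable_const
  set f : EuclideanSpace ℝ (Fin d) → ℝ≥0∞ := fun w => 2 * ENNReal.ofReal (‖w‖ ^ 2)
  have hf : Measurable f := by fun_prop
  set K := ∫⁻ w in S, f w ∂volume.withDensity q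
  have hK : K < ⊤ :=
    calc K = 2 * ∫⁻ w in S, ENNReal.ofReal (‖w‖ ^ 2) ∂volume.withDensity q :=
          lintegral_const_mul _ (by fun_prop)
      _ < ⊤ := ENNReal.mul_lt_top ENNReal.ofNat_lt_top hsmall
  refine ⟨2 * K + 1, by positivity, by finiteness, fun x y _ => ?_⟩
  have hintegrand (v : EuclideanSpace ℝ (Fin d)) :
      ENNReal.ofReal (‖(x - y) + v - reflectOp x y v‖ ^ 2) * controlRatio S q (x - y) v ≤
        f (v + (x - y)) * controlRatio S q (x - y) v + f v :=
    calc _ ≤ (f (v + (x - y)) + f v) * controlRatio S q (x - y) v := by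
          gcongr; exact ofReal_sq_norm_sub_add_sub_reflectOp_le x y v
      _ ≤ f (v + (x - y)) * controlRatio S q (x - y) v + f v * 1 := by
          rw [add_mul]; gcongr; exact controlRatio_le_one _ _
      _ = _ := by rw [mul_one]
  -- the control factor of the integrand is `controlRatio S q (x - y) v` unfolded
  calc ∫⁻ v in S, ENNReal.ofReal (‖(x - y) + v - reflectOp x y v‖ ^ 2) *
          controlRatio S q (x - y) v ∂volume.withDensity q
      ≤ ∫⁻ v in S, f (v + (x - y)) * controlRatio S q (x - y) v + f v ∂volume.withDensity q :=
        lintegral_mono hintegrand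
    _ = ∫⁻ v in S, f (v + (x - y)) * controlRatio S q (x - y) v ∂volume.withDensity q + K :=
        lintegral_add_right _ hf
    _ ≤ K + K := by
        gcongr
        exact (setLIntegral_le_lintegral _ _).trans
          (lintegral_comp_add_mul_controlRatio_le volume hS hq hf (x - y))
    _ ≤ (2 * K + 1) * (1 + ENNReal.ofReal (‖x - y‖ ^ 2)) := by
        rw [← two_mul]
        exact le_self_add.trans (le_mul_of_one_le_right zero_le le_self_add)

/-- Linear growth bound: there is `C > 0` such that for all `x ≠ y`, with `z = x - y`,
`∫_{|v|≤m} |z + v - R(x,y)v|² ρ(v,z) ν(dv) ≤ C(1 + |z|²)`, where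
`ρ(v,z) = (q(v) ∧ q(v+z)𝟙_{|v+z|≤m})/q(v)` (set to `1` where `q(v)=0`). -/
theorem linear_growth {d : ℕ} (m : ℝ) (hm : 0 < m)
    (q : EuclideanSpace ℝ (Fin d) → ℝ≥0∞) (hq : Measurable q)
    (ν : Measure (EuclideanSpace ℝ (Fin d)))
    (hν : ν = MeasureTheory.volume.withDensity q)
    (hbig : ν {v | m < ‖v‖} < ⊤)
    (hsmall : ∫⁻ v in {v | ‖v‖ ≤ m}, ENNReal.ofReal (‖v‖ ^ 2) ∂ν < ⊤) :
    ∃ C : ℝ≥0∞, 0 < C ∧ C < ⊤ ∧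
      ∀ x y : EuclideanSpace ℝ (Fin d), x ≠ y →
        ∫⁻ v in {v | ‖v‖ ≤ m},
            ENNReal.ofReal (‖(x - y) + v - reflectOp x y v‖ ^ 2) *
              (if q v = 0 then 1 else
                min (q v) (if ‖v + (x - y)‖ ≤ m then q (v + (x - y)) else 0) / q v) ∂ν
          ≤ C * (1 + ENNReal.ofReal (‖x - y‖ ^ 2)) :=
  linear_growth_general m q hq ν hν hsmall
end

section
/- Let μ and ν be probability measures on ℝ^d with μ ≠ ν, and write μ = μ∧ν + \tilde{μ}, ν = μ∧ν + \tilde{ν} with α := (μ∧ν)(ℝ^d) ∈ (0,1). Let \bar{μ} := \tilde{μ}/(1-α) and \bar{ν} := \tilde{ν}/(1-α). Then for any concave f : [0,∞) → [0,∞) with f(0) = 0, W_f(μ, ν) = (1-α)·W_f(\bar{μ}, \bar{ν}). -/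
/-!
The cost `c (x, y) = f |x - y|` vanishes on the diagonal and satisfies the triangle inequality,
because a concave `f ≥ 0` on `[0, ∞)` with `f 0 = 0` is nondecreasing and subadditive. For such a
cost, adding a common part `σ` to both marginals does not change the transport cost. Leaving `σ`
in place gives one inequality. For the other, disintegrate a coupling of `μ + σ` and `ν + σ` into a
Markov kernel `K` and chase mass: start from `μ` and move it along `K`; of the mass arriving at `y`,
the fraction `d ν / d (ν + σ)` settles at `y` and the rest, a part of `σ`, is sent along `K` again.
By the triangle inequality the journeys cost no more than the coupling. Since the travelling masses
together are at most `μ + σ`, they tend to zero, so the settled mass is a coupling of `μ` and `ν`.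
The normalization by `1 - α` only rescales both marginals, which rescales the cost.
-/

open MeasureTheory ProbabilityTheory
open scoped ENNReal

/-- The Kantorovich (`L¹`-Wasserstein) "distance" associated with a
cost function `f` applied to the Euclidean distance. -/
noncomputable def Wf {d : ℕ} (f : ℝ → ℝ)
    (μ₁ μ₂ : Measure (EuclideanSpace ℝ (Fin d))) : ℝ≥0∞ :=
  ⨅ (π : Measure (EuclideanSpace ℝ (Fin d) × EuclideanSpace ℝ (Fin d)))
    (_ : π.map Prod.fst = μ₁) (_ : π.map Prod.snd = μ₂),
    ∫⁻ p, ENNReal.ofReal (f (dist p.1 p.2)) ∂π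

section ConcaveOn

variable {f : ℝ → ℝ}

lemma ConcaveOn.monotoneOn_of_nonneg (hf : ConcaveOn ℝ (Set.Ici 0) f)
    (hf₀ : ∀ x, 0 ≤ x → 0 ≤ f x) : MonotoneOn f (Set.Ici 0) := by
  intro r hr s hs hrs
  by_contra! hlt
  have hrs' : r < s := hrs.lt_of_ne (by rintro rfl; exact lt_irrefl _ hlt)
  -- a strict decrease on `[r, s]` persists with the same slope `-δ`, forcing `f` below zero
  set δ := (f r - f s) / (s - r) with hδ
  have hδ0 : 0 < δ := div_pos (by linarith) (by linarith)
  set z := s + f s / δ + 1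
  have hsz : s < z := by have := div_nonneg (hf₀ s hs) hδ0.le; linarith
  have hslope : (f z - f s) / (z - s) ≤ -δ := by
    have := hf.slope_anti_adjacent hr (Set.mem_Ici.2 (by linarith [Set.mem_Ici.1 hs])) hrs' hsz
    rwa [hδ, ← neg_div, neg_sub]
  rw [div_le_iff₀ (by linarith)] at hslope
  have : f z ≤ -δ := by
    have : -δ * (z - s) = -(f s) - δ := by simp only [z]; field_simp; ring
    linarith
  linarith [hf₀ z (by linarith [Set.mem_Ici.1 hs])]

lemma ConcaveOn.map_add_le (hf : ConcaveOn ℝ (Set.Ici 0) f) (hf₀ : 0 ≤ f 0)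
    {a b : ℝ} (ha : 0 ≤ a) (hb : 0 ≤ b) : f (a + b) ≤ f a + f b := by
  rcases (add_nonneg ha hb).eq_or_lt with hab | hab
  · obtain ⟨rfl, rfl⟩ : a = 0 ∧ b = 0 := ⟨by linarith, by linarith⟩
    simpa using hf₀
  -- concavity on the segment `[0, a + b]`, evaluated at `a` and at `b`
  have key : ∀ u v, 0 ≤ u → 0 ≤ v → u + v = a + b →
      v / (a + b) * f 0 + u / (a + b) * f (a + b) ≤ f u := by
    intro u v hu hv huv
    have : (v / (a + b)) • f 0 + (u / (a + b)) • f (a + b)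
        ≤ f ((v / (a + b)) • 0 + (u / (a + b)) • (a + b)) :=
      hf.2 (Set.mem_Ici.2 le_rfl) (Set.mem_Ici.2 hab.le) (by positivity) (by positivity)
        (by field_simp; linarith)
    simp only [smul_eq_mul, mul_zero, zero_add] at this
    rwa [div_mul_cancel₀ _ hab.ne'] at this
  have h1 := key a b ha hb rfl
  have h2 := key b a hb ha (add_comm b a)
  have hsum : b / (a + b) + a / (a + b) = 1 := by field_simp; ring
  linear_combination h1 + h2 + hf₀ - (f 0 + f (a + b)) * hsum

end ConcaveOn

section Measures

variable {X Y Z : Type*} [MeasurableSpace X] [MeasurableSpace Y] [MeasurableSpace Z]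

lemma map_withDensity_comp (μ : Measure X) {f : X → Y} (hf : Measurable f) {g : Y → ℝ≥0∞}
    (hg : Measurable g) : (μ.withDensity (g ∘ f)).map f = (μ.map f).withDensity g := by
  ext s hs
  rw [Measure.map_apply hf hs, withDensity_apply _ (hf hs), withDensity_apply _ hs,
    setLIntegral_map hs hg hf]
  rfl

lemma Measure.sum_le_of_forall_sum_range_le {m : ℕ → Measure X} {ρ : Measure X}
    (h : ∀ n, ∑ i ∈ Finset.range n, m i ≤ ρ) : Measure.sum m ≤ ρ := by
  refine Measure.le_iff.2 fun s hs => ?_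
  rw [Measure.sum_apply _ hs, ENNReal.tsum_eq_iSup_nat]
  exact iSup_le fun n => by simpa only [Measure.finsetSum_apply] using h n s

lemma comp_withDensity_mono (K : Kernel X Y) {m m' : Measure X} (h : m ≤ m') (g : Y → ℝ≥0∞) :
    (K ∘ₘ m).withDensity g ≤ (K ∘ₘ m').withDensity g := by
  refine Measure.le_iff.2 fun s hs => ?_
  rw [withDensity_apply _ hs, withDensity_apply _ hs]
  refine lintegral_mono' (Measure.restrict_mono le_rfl (Measure.le_iff.2 fun t ht => ?_)) le_rfl
  rw [Measure.bind_apply ht K.aemeasurable, Measure.bind_apply ht K.aemeasurable]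
  exact lintegral_mono' h le_rfl

lemma Finset.sum_comp_withDensity {ι : Type*} (s : Finset ι) (K : Kernel X Y) (m : ι → Measure X)
    (g : Y → ℝ≥0∞) : ∑ i ∈ s, (K ∘ₘ m i).withDensity g = (K ∘ₘ ∑ i ∈ s, m i).withDensity g := by
  classical
  induction s using Finset.induction_on with
  | empty => simp [withDensity_zero_left]
  | insert i s hi ih =>
    rw [Finset.sum_insert hi, Finset.sum_insert hi, ih, Measure.comp_add, withDensity_add_measure]

lemma exists_withDensity_add_eq (ν σ : Measure X) [IsFiniteMeasure ν] [IsFiniteMeasure σ] :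
    ∃ h w : X → ℝ≥0∞, Measurable h ∧ Measurable w ∧ h + w = 1 ∧
      (ν + σ).withDensity h = ν ∧ (ν + σ).withDensity w = σ := by
  -- truncating at `1` makes `h + (1 - h) = 1` hold everywhere, not only almost everywhere
  set h : X → ℝ≥0∞ := fun x => min (ν.rnDeriv (ν + σ) x) 1
  have hh : Measurable h := (Measure.measurable_rnDeriv _ _).min measurable_const
  have hhw : h + (1 - h) = 1 := funext fun x => add_tsub_cancel_of_le (min_le_right _ _)
  have hν : (ν + σ).withDensity h = ν := by
    have hle : ν ≤ ν + σ := Measure.le_add_right le_rfl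
    have hmin : h =ᵐ[ν + σ] ν.rnDeriv (ν + σ) := by
      filter_upwards [Measure.rnDeriv_le_one_of_le hle] with x hx using min_eq_left hx
    rw [withDensity_congr_ae hmin,
      Measure.withDensity_rnDeriv_eq ν (ν + σ) (Measure.absolutelyContinuous_of_le hle)]
  refine ⟨h, 1 - h, hh, measurable_const.sub hh, hhw, hν, ?_⟩
  rw [← Measure.add_right_inj ν]
  nth_rw 1 [← hν]
  rw [← withDensity_add_left hh, hhw, withDensity_one]

lemma Measure.fst_map_diag (μ : Measure X) : (μ.map fun x => (x, x)).fst = μ := by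
  rw [Measure.fst_map_prodMk (Y := fun x => x) measurable_id', Measure.map_id']

lemma Measure.snd_map_diag (μ : Measure X) : (μ.map fun x => (x, x)).snd = μ := by
  rw [Measure.snd_map_prodMk (X := fun x => x) measurable_id', Measure.map_id']

lemma fst_id_parallelComp_comp (K : Kernel X Y) [IsMarkovKernel K] (ρ : Measure (Z × X)) :
    ((Kernel.id ∥ₖ K) ∘ₘ ρ).fst = ρ.fst := by
  ext s hs
  rw [Measure.fst_apply hs, Measure.bind_apply (measurable_fst hs) (Kernel.aemeasurable _),
    Measure.fst_apply hs, ← lintegral_indicator_one (measurable_fst hs)]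
  refine lintegral_congr fun p => ?_
  rw [Kernel.parallelComp_apply, ← Set.prod_univ, Measure.prod_prod, Kernel.id_apply,
    measure_univ, mul_one, Measure.dirac_apply' _ hs]
  rfl

lemma snd_id_parallelComp_comp (K : Kernel X Y) [IsSFiniteKernel K] (ρ : Measure (Z × X)) :
    ((Kernel.id ∥ₖ K) ∘ₘ ρ).snd = K ∘ₘ ρ.snd := by
  ext s hs
  rw [Measure.snd_apply hs, Measure.bind_apply (measurable_snd hs) (Kernel.aemeasurable _),
    Measure.bind_apply hs K.aemeasurable, Measure.snd,
    lintegral_map (K.measurable_coe hs) measurable_snd]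
  refine lintegral_congr fun p => ?_
  rw [Kernel.parallelComp_apply, ← Set.univ_prod, Measure.prod_prod, Kernel.id_apply,
    measure_univ, one_mul]

lemma lintegral_id_parallelComp_comp_le {c : X × X → ℝ≥0∞} (hc : Measurable c)
    (hc_tri : ∀ x y z, c (x, z) ≤ c (x, y) + c (y, z)) (K : Kernel X X) [IsMarkovKernel K]
    (ρ : Measure (X × X)) :
    ∫⁻ p, c p ∂(((Kernel.id : Kernel X X) ∥ₖ K) ∘ₘ ρ)
      ≤ ∫⁻ p, c p ∂ρ + ∫⁻ y, ∫⁻ z, c (y, z) ∂K y ∂ρ.snd := by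
  rw [Measure.lintegral_bind (Kernel.aemeasurable _) hc.aemeasurable, Measure.snd,
    lintegral_map (hc.lintegral_kernel_prod_right' (κ := K)) measurable_snd,
    ← lintegral_add_left hc]
  refine lintegral_mono fun p => ?_
  rw [Kernel.parallelComp_apply, Kernel.id_apply, lintegral_prod _ hc.aemeasurable,
    lintegral_dirac' _ hc.lintegral_prod_right']
  calc ∫⁻ z, c (p.1, z) ∂K p.2 ≤ ∫⁻ z, (c p + c (p.2, z)) ∂K p.2 :=
        lintegral_mono fun z => hc_tri p.1 p.2 z
    _ = c p + ∫⁻ z, c (p.2, z) ∂K p.2 := by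
        rw [lintegral_add_left measurable_const, lintegral_const, measure_univ, mul_one]

end Measures

section MassChasing

variable {X : Type*} [MeasurableSpace X] (K : Kernel X X) (w : X → ℝ≥0∞) (μ : Measure X)

/-- Pairs (starting point, current point) of the part of `μ` still travelling after `n` steps
along `K`, when after each step the fraction `w` of the arriving mass travels on. -/
noncomputable def travellingMass : ℕ → Measure (X × X)
  | 0 => μ.map fun x => (x, x)
  | n + 1 => (((Kernel.id : Kernel X X) ∥ₖ K) ∘ₘ travellingMass n).withDensity (w ∘ Prod.snd)

noncomputable def settledMass (h : X → ℝ≥0∞) (n : ℕ) : Measure (X × X) :=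
  (((Kernel.id : Kernel X X) ∥ₖ K) ∘ₘ travellingMass K w μ n).withDensity (h ∘ Prod.snd)

variable {K w μ} {h : X → ℝ≥0∞}

@[simp]
lemma fst_travellingMass_zero : (travellingMass K w μ 0).fst = μ :=
  Measure.fst_map_diag μ

@[simp]
lemma snd_travellingMass_zero : (travellingMass K w μ 0).snd = μ :=
  Measure.snd_map_diag μ

lemma travellingMass_succ_add_settledMass (hw : Measurable w) (hhw : h + w = 1) (n : ℕ) :
    travellingMass K w μ (n + 1) + settledMass K w μ h n
      = ((Kernel.id : Kernel X X) ∥ₖ K) ∘ₘ travellingMass K w μ n := by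
  have hsum : w ∘ Prod.snd + h ∘ Prod.snd = (1 : X × X → ℝ≥0∞) :=
    funext fun p => by simpa [add_comm] using congrFun hhw p.2
  rw [travellingMass, settledMass, ← withDensity_add_left (hw.comp measurable_snd), hsum,
    withDensity_one]

lemma snd_travellingMass_succ [IsSFiniteKernel K] (hw : Measurable w) (n : ℕ) :
    (travellingMass K w μ (n + 1)).snd = (K ∘ₘ (travellingMass K w μ n).snd).withDensity w := by
  rw [travellingMass, Measure.snd, map_withDensity_comp _ measurable_snd hw, ← Measure.snd,
    snd_id_parallelComp_comp]

lemma snd_settledMass [IsSFiniteKernel K] (hh : Measurable h) (n : ℕ) :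
    (settledMass K w μ h n).snd = (K ∘ₘ (travellingMass K w μ n).snd).withDensity h := by
  rw [settledMass, Measure.snd, map_withDensity_comp _ measurable_snd hh, ← Measure.snd,
    snd_id_parallelComp_comp]

lemma sum_fst_settledMass_add_fst_travellingMass [IsMarkovKernel K] (hw : Measurable w)
    (hhw : h + w = 1) (n : ℕ) :
    ∑ i ∈ Finset.range n, (settledMass K w μ h i).fst + (travellingMass K w μ n).fst = μ := by
  induction n with
  | zero => simp
  | succ n ih =>
    rw [Finset.sum_range_succ, add_assoc, add_comm (settledMass K w μ h n).fst, ← Measure.fst_add,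
      travellingMass_succ_add_settledMass hw hhw, fst_id_parallelComp_comp, ih]

lemma sum_snd_travellingMass_le [IsSFiniteKernel K] (hw : Measurable w) {σ : Measure X}
    (hσ : (K ∘ₘ (μ + σ)).withDensity w ≤ σ) (n : ℕ) :
    ∑ i ∈ Finset.range n, (travellingMass K w μ i).snd ≤ μ + σ := by
  induction n with
  | zero => simpa using Measure.zero_le _
  | succ n ih =>
    simp_rw [Finset.sum_range_succ', snd_travellingMass_succ hw, Finset.sum_comp_withDensity,
      snd_travellingMass_zero, add_comm _ μ]
    exact add_le_add le_rfl ((comp_withDensity_mono K ih w).trans hσ)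

lemma sum_lintegral_settledMass_add_lintegral_travellingMass_le {c : X × X → ℝ≥0∞}
    (hc : Measurable c) (hc_diag : ∀ x, c (x, x) = 0)
    (hc_tri : ∀ x y z, c (x, z) ≤ c (x, y) + c (y, z)) [IsMarkovKernel K] (hw : Measurable w)
    (hhw : h + w = 1) (n : ℕ) :
    ∑ i ∈ Finset.range n, ∫⁻ p, c p ∂settledMass K w μ h i + ∫⁻ p, c p ∂travellingMass K w μ n
      ≤ ∫⁻ y, ∫⁻ z, c (y, z) ∂K y ∂(∑ i ∈ Finset.range n, (travellingMass K w μ i).snd) := by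
  induction n with
  | zero =>
    rw [Finset.sum_range_zero, zero_add, travellingMass,
      lintegral_map hc (by fun_prop : Measurable fun x : X => (x, x))]
    simp [hc_diag]
  | succ n ih =>
    set G : X → ℝ≥0∞ := fun y => ∫⁻ z, c (y, z) ∂K y
    calc ∑ i ∈ Finset.range (n + 1), ∫⁻ p, c p ∂settledMass K w μ h i
          + ∫⁻ p, c p ∂travellingMass K w μ (n + 1)
        = ∑ i ∈ Finset.range n, ∫⁻ p, c p ∂settledMass K w μ h i
          + ∫⁻ p, c p ∂(((Kernel.id : Kernel X X) ∥ₖ K) ∘ₘ travellingMass K w μ n) := by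
          rw [← travellingMass_succ_add_settledMass hw hhw, lintegral_add_measure,
            Finset.sum_range_succ]
          ring
      _ ≤ ∑ i ∈ Finset.range n, ∫⁻ p, c p ∂settledMass K w μ h i
          + (∫⁻ p, c p ∂travellingMass K w μ n + ∫⁻ y, G y ∂(travellingMass K w μ n).snd) := by
          gcongr
          exact lintegral_id_parallelComp_comp_le hc hc_tri K _
      _ ≤ ∫⁻ y, G y ∂(∑ i ∈ Finset.range n, (travellingMass K w μ i).snd)
          + ∫⁻ y, G y ∂(travellingMass K w μ n).snd := by
          rw [← add_assoc]
          gcongr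
      _ = ∫⁻ y, G y ∂(∑ i ∈ Finset.range (n + 1), (travellingMass K w μ i).snd) := by
          rw [Finset.sum_range_succ, lintegral_add_measure]

lemma tendsto_travellingMass_univ [IsMarkovKernel K] (hw : Measurable w) {σ : Measure X}
    [IsFiniteMeasure μ] [IsFiniteMeasure σ] (hσ : (K ∘ₘ (μ + σ)).withDensity w ≤ σ) :
    Filter.Tendsto (fun n => travellingMass K w μ n Set.univ) Filter.atTop (nhds 0) := by
  refine ENNReal.tendsto_atTop_zero_of_tsum_ne_top (ne_top_of_le_ne_top
    (measure_ne_top (μ + σ) Set.univ) ?_)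
  rw [ENNReal.tsum_eq_iSup_nat]
  refine iSup_le fun n => ?_
  simpa only [Measure.finsetSum_apply, Measure.snd_univ] using
    sum_snd_travellingMass_le hw hσ n Set.univ

lemma measure_univ_le_sum_settledMass [IsMarkovKernel K] (hw : Measurable w) (hhw : h + w = 1)
    {σ : Measure X} [IsFiniteMeasure μ] [IsFiniteMeasure σ]
    (hσ : (K ∘ₘ (μ + σ)).withDensity w ≤ σ) :
    μ Set.univ ≤ Measure.sum (settledMass K w μ h) Set.univ := by
  have hbound : ∀ n, μ Set.univ
      ≤ Measure.sum (settledMass K w μ h) Set.univ + travellingMass K w μ n Set.univ := by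
    intro n
    have := congrArg (· Set.univ)
      (sum_fst_settledMass_add_fst_travellingMass (K := K) (μ := μ) hw hhw n)
    simp only [Measure.add_apply, Measure.finsetSum_apply, Measure.fst_univ] at this
    rw [← this, Measure.sum_apply _ MeasurableSet.univ]
    gcongr
    exact ENNReal.sum_le_tsum _
  exact ge_of_tendsto' (by simpa using (tendsto_travellingMass_univ hw hσ).const_add _) hbound

end MassChasing

section Coupling

variable {X : Type*} [MeasurableSpace X] {c : X × X → ℝ≥0∞}

theorem exists_coupling_lintegral_le_lintegral_compProd (hc : Measurable c)
    (hc_diag : ∀ x, c (x, x) = 0) (hc_tri : ∀ x y z, c (x, z) ≤ c (x, y) + c (y, z))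
    (K : Kernel X X) [IsMarkovKernel K] {μ ν σ : Measure X}
    [IsFiniteMeasure μ] [IsFiniteMeasure ν] [IsFiniteMeasure σ] (hK : K ∘ₘ (μ + σ) = ν + σ) :
    ∃ π : Measure (X × X), π.fst = μ ∧ π.snd = ν ∧
      ∫⁻ p, c p ∂π ≤ ∫⁻ p, c p ∂((μ + σ) ⊗ₘ K) := by
  obtain ⟨h, w, hh, hw, hhw, hν, hσ⟩ := exists_withDensity_add_eq ν σ
  rw [← hK] at hν hσ
  set π := Measure.sum (settledMass K w μ h)
  have hfst : π.fst ≤ μ := by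
    refine (Measure.fst_sum _).trans_le (Measure.sum_le_of_forall_sum_range_le fun n => ?_)
    exact (Measure.le_add_right le_rfl).trans
      (sum_fst_settledMass_add_fst_travellingMass hw hhw n).le
  have hsnd : π.snd ≤ ν := by
    refine (Measure.snd_sum _).trans_le (Measure.sum_le_of_forall_sum_range_le fun n => ?_)
    simp_rw [snd_settledMass hh, Finset.sum_comp_withDensity, ← hν]
    exact comp_withDensity_mono K (sum_snd_travellingMass_le hw hσ.le n) h
  have hmass : μ Set.univ ≤ π Set.univ := measure_univ_le_sum_settledMass hw hhw hσ.le
  have hμν : μ Set.univ = ν Set.univ := by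
    have := congrArg (· Set.univ) hK
    simp only [Measure.comp_apply_univ, Measure.add_apply] at this
    exact (ENNReal.add_left_inj (measure_ne_top σ _)).1 this
  have := isFiniteMeasure_of_le μ hfst
  have := isFiniteMeasure_of_le ν hsnd
  refine ⟨π, Measure.eq_of_le_of_measure_univ_eq hfst ((hfst _).antisymm ?_),
    Measure.eq_of_le_of_measure_univ_eq hsnd ((hsnd _).antisymm ?_), ?_⟩
  · rwa [Measure.fst_univ]
  · rwa [Measure.snd_univ, ← hμν]
  rw [lintegral_sum_measure, ENNReal.tsum_eq_iSup_nat, Measure.lintegral_compProd hc]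
  refine iSup_le fun n => le_self_add.trans <|
    (sum_lintegral_settledMass_add_lintegral_travellingMass_le hc hc_diag hc_tri hw hhw n).trans ?_
  exact lintegral_mono' (sum_snd_travellingMass_le hw hσ.le n) le_rfl

end Coupling

section TransportCost

variable {X : Type*} [MeasurableSpace X] {c : X × X → ℝ≥0∞}

noncomputable def transportCost (c : X × X → ℝ≥0∞) (μ ν : Measure X) : ℝ≥0∞ :=
  ⨅ (π : Measure (X × X)) (_ : π.fst = μ) (_ : π.snd = ν), ∫⁻ p, c p ∂π

lemma transportCost_le {μ ν : Measure X} {π : Measure (X × X)} (h₁ : π.fst = μ)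
    (h₂ : π.snd = ν) : transportCost c μ ν ≤ ∫⁻ p, c p ∂π :=
  iInf₂_le_of_le π h₁ (iInf_le _ h₂)

lemma le_transportCost {μ ν : Measure X} {a : ℝ≥0∞}
    (h : ∀ π : Measure (X × X), π.fst = μ → π.snd = ν → a ≤ ∫⁻ p, c p ∂π) :
    a ≤ transportCost c μ ν :=
  le_iInf₂ fun π h₁ => le_iInf (h π h₁)

lemma mul_transportCost_le_transportCost_smul (μ ν : Measure X) {a : ℝ≥0∞} (ha₀ : a ≠ 0)
    (ha : a ≠ ∞) : a * transportCost c μ ν ≤ transportCost c (a • μ) (a • ν) := by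
  refine le_transportCost fun π h₁ h₂ => ?_
  calc a * transportCost c μ ν ≤ a * ∫⁻ p, c p ∂(a⁻¹ • π) := by
        gcongr
        refine transportCost_le ?_ ?_
        · rw [Measure.fst, Measure.map_smul, ← Measure.fst, h₁, smul_smul,
            ENNReal.inv_mul_cancel ha₀ ha, one_smul]
        · rw [Measure.snd, Measure.map_smul, ← Measure.snd, h₂, smul_smul,
            ENNReal.inv_mul_cancel ha₀ ha, one_smul]
    _ = ∫⁻ p, c p ∂π := by
        rw [lintegral_smul_measure, smul_eq_mul, ← mul_assoc, ENNReal.mul_inv_cancel ha₀ ha,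
          one_mul]

lemma transportCost_smul (μ ν : Measure X) {a : ℝ≥0∞} (ha₀ : a ≠ 0) (ha : a ≠ ∞) :
    transportCost c (a • μ) (a • ν) = a * transportCost c μ ν := by
  refine le_antisymm ?_ (mul_transportCost_le_transportCost_smul μ ν ha₀ ha)
  have := mul_transportCost_le_transportCost_smul (c := c) (a • μ) (a • ν)
    (ENNReal.inv_ne_zero.2 ha) (ENNReal.inv_ne_top.2 ha₀)
  rw [smul_smul, smul_smul, ENNReal.inv_mul_cancel ha₀ ha, one_smul, one_smul] at this
  calc transportCost c (a • μ) (a • ν) = a * (a⁻¹ * transportCost c (a • μ) (a • ν)) := by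
        rw [← mul_assoc, ENNReal.mul_inv_cancel ha₀ ha, one_mul]
    _ ≤ a * transportCost c μ ν := by gcongr

lemma transportCost_add_le (hc : Measurable c) (hc_diag : ∀ x, c (x, x) = 0)
    (μ ν σ : Measure X) : transportCost c (μ + σ) (ν + σ) ≤ transportCost c μ ν := by
  have hdiag : Measurable fun x : X => (x, x) := by fun_prop
  refine le_transportCost fun π h₁ h₂ => ?_
  calc transportCost c (μ + σ) (ν + σ) ≤ ∫⁻ p, c p ∂(π + σ.map fun x => (x, x)) := by
        refine transportCost_le ?_ ?_
        · rw [Measure.fst_add, h₁, Measure.fst_map_diag]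
        · rw [Measure.snd_add, h₂, Measure.snd_map_diag]
    _ = ∫⁻ p, c p ∂π := by simp [lintegral_add_measure, lintegral_map hc hdiag, hc_diag]

lemma transportCost_le_add [StandardBorelSpace X] [Nonempty X] (hc : Measurable c)
    (hc_diag : ∀ x, c (x, x) = 0) (hc_tri : ∀ x y z, c (x, z) ≤ c (x, y) + c (y, z))
    (μ ν σ : Measure X) [IsFiniteMeasure μ] [IsFiniteMeasure ν] [IsFiniteMeasure σ] :
    transportCost c μ ν ≤ transportCost c (μ + σ) (ν + σ) := by
  refine le_transportCost fun γ h₁ h₂ => ?_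
  have : IsFiniteMeasure γ := ⟨by rw [← Measure.fst_univ, h₁]; exact measure_lt_top _ _⟩
  have hγ : (μ + σ) ⊗ₘ γ.condKernel = γ := h₁ ▸ γ.disintegrate γ.condKernel
  obtain ⟨π, hπ₁, hπ₂, hπ⟩ := exists_coupling_lintegral_le_lintegral_compProd hc hc_diag hc_tri
    γ.condKernel (μ := μ) (ν := ν) (σ := σ)
    (by rw [← Measure.snd_compProd, hγ, h₂])
  exact (transportCost_le hπ₁ hπ₂).trans (hγ ▸ hπ)

lemma transportCost_add [StandardBorelSpace X] [Nonempty X] (hc : Measurable c)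
    (hc_diag : ∀ x, c (x, x) = 0) (hc_tri : ∀ x y z, c (x, z) ≤ c (x, y) + c (y, z))
    (μ ν σ : Measure X) [IsFiniteMeasure μ] [IsFiniteMeasure ν] [IsFiniteMeasure σ] :
    transportCost c (μ + σ) (ν + σ) = transportCost c μ ν :=
  (transportCost_add_le hc hc_diag μ ν σ).antisymm (transportCost_le_add hc hc_diag hc_tri μ ν σ)

end TransportCost

section DistanceCost

variable {X : Type*} [PseudoMetricSpace X] {f : ℝ → ℝ}

lemma measurable_ofReal_comp_dist [MeasurableSpace X] [OpensMeasurableSpace X]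
    [SecondCountableTopology X] (hf : MonotoneOn f (Set.Ici 0)) :
    Measurable fun p : X × X => ENNReal.ofReal (f (dist p.1 p.2)) := by
  have hmono : Monotone fun r => f (max r 0) := fun r s hrs =>
    hf (le_max_right r 0) (le_max_right s 0) (max_le_max hrs le_rfl)
  simpa only [Function.comp_def, max_eq_left dist_nonneg] using
    ENNReal.measurable_ofReal.comp (hmono.measurable.comp measurable_dist)

lemma ofReal_comp_dist_le_add (hf : ConcaveOn ℝ (Set.Ici 0) f) (hf₀ : ∀ r, 0 ≤ r → 0 ≤ f r)
    (x y z : X) : ENNReal.ofReal (f (dist x z))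
      ≤ ENNReal.ofReal (f (dist x y)) + ENNReal.ofReal (f (dist y z)) := by
  rw [← ENNReal.ofReal_add (hf₀ _ dist_nonneg) (hf₀ _ dist_nonneg)]
  refine ENNReal.ofReal_le_ofReal ?_
  calc f (dist x z) ≤ f (dist x y + dist y z) :=
        hf.monotoneOn_of_nonneg hf₀ dist_nonneg (add_nonneg dist_nonneg dist_nonneg)
          (dist_triangle x y z)
    _ ≤ f (dist x y) + f (dist y z) := hf.map_add_le (hf₀ 0 le_rfl) dist_nonneg dist_nonneg

end DistanceCost

theorem Wf_common_mass_decomposition_general {d : ℕ}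
    (μ ν : Measure (EuclideanSpace ℝ (Fin d)))
    [IsProbabilityMeasure μ] [IsProbabilityMeasure ν]
    (α : ℝ≥0∞) (hα1 : α < 1)
    (f : ℝ → ℝ) (hf_concave : ConcaveOn ℝ (Set.Ici (0:ℝ)) f)
    (hf0 : f 0 = 0) (hf_pos : ∀ r, 0 < r → 0 < f r) :
    Wf f μ ν = (1 - α) * Wf f ((1 - α)⁻¹ • (μ - μ ⊓ ν)) ((1 - α)⁻¹ • (ν - μ ⊓ ν)) := by
  have hf₀ : ∀ r, 0 ≤ r → 0 ≤ f r := fun r hr =>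
    hr.eq_or_lt.elim (fun h => h ▸ hf0.ge) fun h => (hf_pos r h).le
  have hc := measurable_ofReal_comp_dist (X := EuclideanSpace ℝ (Fin d))
    (hf_concave.monotoneOn_of_nonneg hf₀)
  have hc_diag : ∀ x : EuclideanSpace ℝ (Fin d), ENNReal.ofReal (f (dist x x)) = 0 := by
    simp [hf0]
  have := isFiniteMeasure_of_le μ (inf_le_left : μ ⊓ ν ≤ μ)
  have := isFiniteMeasure_of_le μ (Measure.sub_le : μ - μ ⊓ ν ≤ μ)
  have := isFiniteMeasure_of_le ν (Measure.sub_le : ν - μ ⊓ ν ≤ ν)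
  have hcommon := transportCost_add hc hc_diag (ofReal_comp_dist_le_add hf_concave hf₀)
    (μ - μ ⊓ ν) (ν - μ ⊓ ν) (μ ⊓ ν)
  rw [Measure.sub_add_cancel_of_le inf_le_left, Measure.sub_add_cancel_of_le inf_le_right]
    at hcommon
  have h1α : 1 - α ≠ 0 := (tsub_pos_of_lt hα1).ne'
  have h1α' : 1 - α ≠ ∞ := ENNReal.sub_ne_top ENNReal.one_ne_top
  change transportCost _ μ ν = (1 - α) * transportCost _ _ _
  rw [transportCost_smul _ _ (ENNReal.inv_ne_zero.2 h1α') (ENNReal.inv_ne_top.2 h1α), ← mul_assoc,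
    ENNReal.mul_inv_cancel h1α h1α', one_mul, hcommon]

/-- Decomposing `μ = μ∧ν + μ̃`, `ν = μ∧ν + ν̃` with `α = (μ∧ν)(ℝ^d) ∈ (0,1)` and
normalizing `μ̄ = μ̃/(1-α)`, `ν̄ = ν̃/(1-α)`, one has `W_f(μ,ν) = (1-α) W_f(μ̄,ν̄)`
for concave `f` with `f(0) = 0` and `f > 0` on `(0,∞)`. -/
theorem Wf_common_mass_decomposition {d : ℕ}
    (μ ν : Measure (EuclideanSpace ℝ (Fin d)))
    [IsProbabilityMeasure μ] [IsProbabilityMeasure ν] (hne : μ ≠ ν)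
    (α : ℝ≥0∞) (hα : α = (μ ⊓ ν) Set.univ) (hα0 : 0 < α) (hα1 : α < 1)
    (f : ℝ → ℝ) (hf_concave : ConcaveOn ℝ (Set.Ici (0:ℝ)) f)
    (hf0 : f 0 = 0) (hf_pos : ∀ r, 0 < r → 0 < f r) :
    Wf f μ ν = (1 - α) * Wf f ((1 - α)⁻¹ • (μ - μ ⊓ ν)) ((1 - α)⁻¹ • (ν - μ ⊓ ν)) :=
  Wf_common_mass_decomposition_general μ ν α hα1 f hf_concave hf0 hf_pos
end
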